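/- Let (t_n) be a k-admissible, (k−1)-regular knot sequence and let Δ = D_{m,i}^{(k−1)} be a span of k consecutive knots in 𝒯_m. Let N(Δ) be the set of indices n such that Δ contains exactly k knots of 𝒯_n (with multiplicity) and the characteristic interval J_n is contained in Δ. Then Σ_{n∈N(Δ)} |J_n| ≤ c_k |Δ| with c_k depending only on k. -/

import Mathlib

open MeasureTheory Set Filter

attribute [local instance] Classical.propDecidable

noncomputable section

/-- A `k`-admissible knot sequence on `[0,1]`: `t 0 = 0`, `t 1 = 1`, the points
`t n` for `n ≥ 2` are dense in the open unit interval and every value is attained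
at most `k` times. -/
structure KnotSeq (k : ℕ) where
  t : ℕ → ℝ
  two_le : 2 ≤ k
  t0 : t 0 = 0
  t1 : t 1 = 1
  mem_Ioo : ∀ n, 2 ≤ n → t n ∈ Set.Ioo (0:ℝ) 1
  dense' : ∀ x ∈ Set.Icc (0:ℝ) 1, ∀ ε : ℝ, 0 < ε → ∃ n, 2 ≤ n ∧ |t n - x| < ε
  mult_finite : ∀ x : ℝ, ({n | 2 ≤ n ∧ t n = x} : Set ℕ).Finite
  mult_le : ∀ x : ℝ, ({n | 2 ≤ n ∧ t n = x} : Set ℕ).ncard ≤ k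

variable {k : ℕ}

/-- The sorted list of knots of the partition `𝒯_n`: the points `t 2, …, t n`
together with `0` and `1`, each with multiplicity `k`. -/
noncomputable def KnotSeq.plist (K : KnotSeq k) (n : ℕ) : List ℝ :=
  (List.replicate k (0:ℝ) ++ List.replicate k (1:ℝ) ++
    ((List.range (n-1)).map (fun j => K.t (j+2)))).mergeSort (fun a b => decide (a ≤ b))

/-- `K.τ n i` is the `i`-th knot `τ_{n,i}` of the partition `𝒯_n` (1-indexed,
`1 ≤ i ≤ n + 2k - 1`). -/
noncomputable def KnotSeq.τ (K : KnotSeq k) (n i : ℕ) : ℝ := (K.plist n).getD (i-1) 0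

/-- The length `|D_{n,i}^{(ℓ)}| = τ_{n,i+ℓ} - τ_{n,i}`. -/
noncomputable def KnotSeq.len (K : KnotSeq k) (n i ℓ : ℕ) : ℝ := K.τ n (i+ℓ) - K.τ n i

/-- `ℓ`-regularity with parameter `γ`: neighbouring spans of `ℓ+1` consecutive
knots have comparable lengths. -/
def KnotSeq.Regular (K : KnotSeq k) (ℓ : ℕ) (γ : ℝ) : Prop :=
  ∀ n, 2 ≤ n → ∀ i, k - ℓ + 1 ≤ i → i ≤ n + k - 2 →
    K.len n i ℓ / γ ≤ K.len n (i+1) ℓ ∧ K.len n (i+1) ℓ ≤ γ * K.len n i ℓ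

/-- Truncated power function `x ↦ (x-a)_+^d`. -/
def truncPow (a : ℝ) (d : ℕ) : ℝ → ℝ := fun x => (max (x - a) 0) ^ d

/-- Multiplicity of the knot `t j` among `t 2, …, t j`. -/
noncomputable def KnotSeq.multUpTo (K : KnotSeq k) (j : ℕ) : ℕ :=
  ({i | 2 ≤ i ∧ i ≤ j ∧ K.t i = K.t j} : Set ℕ).ncard

/-- The space `𝒮_n^{(k)}` of splines of order `k` with knots `𝒯_n`, realized as the
span of polynomials of degree `< k` and appropriate truncated powers. -/
noncomputable def KnotSeq.splineSpace (K : KnotSeq k) (n : ℕ) : Submodule ℝ (ℝ → ℝ) :=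
  Submodule.span ℝ
    ({f | ∃ d, d < k ∧ f = fun x : ℝ => x ^ d} ∪
     {f | ∃ j, 2 ≤ j ∧ j ≤ n ∧ f = truncPow (K.t j) (k - K.multUpTo j)})

/-- The increasing ladder of spaces, reindexed over `ℕ`: index `m` corresponds to the
paper's index `n = m - k + 2`; for `m < k` we get polynomials of degree `≤ m`. -/
noncomputable def KnotSeq.sys (K : KnotSeq k) (m : ℕ) : Submodule ℝ (ℝ → ℝ) :=
  if m < k then Submodule.span ℝ {f | ∃ d, d ≤ m ∧ f = fun x : ℝ => x ^ d}
  else K.splineSpace (m - k + 2)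

/-- `f` is the orthonormal spline system of order `k` associated with `K`
(reindexed so that the paper's `f_n` is `f (n + k - 2)`). -/
def KnotSeq.IsOSS (K : KnotSeq k) (f : ℕ → ℝ → ℝ) : Prop :=
  ∀ m, f m ∈ K.sys m ∧ (∫ x in (0:ℝ)..1, (f m x)^2) = 1 ∧
    ∀ m', m' < m → ∀ g ∈ K.sys m', (∫ x in (0:ℝ)..1, f m x * g x) = 0

/-- The (last) position `i₀` of the newly inserted knot `t n` inside `𝒯_n`. -/
noncomputable def KnotSeq.i0 (K : KnotSeq k) (n : ℕ) : ℕ :=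
  k + ({j | 2 ≤ j ∧ j ≤ n ∧ K.t j < K.t n} : Set ℕ).ncard
    + ({j | 2 ≤ j ∧ j ≤ n ∧ K.t j = K.t n} : Set ℕ).ncard

/-- `|α_j|`, the absolute value of the coefficient from formula (3.2) of the paper. -/
noncomputable def KnotSeq.absα (K : KnotSeq k) (n j : ℕ) : ℝ :=
  (∏ l ∈ Finset.Ico (K.i0 n - k + 1) j,
      (K.τ n (K.i0 n) - K.τ n l) / (K.τ n (l+k) - K.τ n l)) *
  (∏ l ∈ Finset.Ico (j+1) (K.i0 n),
      (K.τ n (l+k) - K.τ n (K.i0 n)) / (K.τ n (l+k) - K.τ n l))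

/-- `Λ⁰`: indices whose B-spline support is approximately minimal. -/
noncomputable def KnotSeq.Λ0 (K : KnotSeq k) (n : ℕ) : Finset ℕ :=
  (Finset.Icc (K.i0 n - k) (K.i0 n)).filter (fun j =>
    ∀ l ∈ Finset.Icc (K.i0 n - k) (K.i0 n), K.len n j k ≤ 2 * K.len n l k)

/-- `Λ¹`: indices of `Λ⁰` with maximal `|α_j|`. -/
noncomputable def KnotSeq.Λ1 (K : KnotSeq k) (n : ℕ) : Finset ℕ :=
  (K.Λ0 n).filter (fun j => ∀ l ∈ K.Λ0 n, K.absα n l ≤ K.absα n j)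

/-- `J` is a characteristic interval for the pair `(𝒯_n, 𝒯_{n-1})`: a knot interval
of maximal length inside the support `[τ_{j⁰}, τ_{j⁰+k}]` for some `j⁰ ∈ Λ¹`. -/
def KnotSeq.IsCharInterval (K : KnotSeq k) (n : ℕ) (J : Set ℝ) : Prop :=
  ∃ j0 ∈ K.Λ1 n, ∃ l, l < k ∧
    J = Set.Icc (K.τ n (j0+l)) (K.τ n (j0+l+1)) ∧
    ∀ l' < k, K.len n (j0+l') 1 ≤ K.len n (j0+l) 1

/-- `d_n`-type count: the number of knots of `𝒯_n` (with multiplicity) lying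
between the sets `A` and `B` (including endpoints of both). -/
noncomputable def KnotSeq.dcount (K : KnotSeq k) (n : ℕ) (A B : Set ℝ) : ℕ :=
  ((Finset.Icc 1 (n+2*k-1)).filter (fun i =>
    K.τ n i ∈ Set.Icc (min (sSup A) (sSup B)) (max (sInf A) (sInf B)))).card

/-- Distance between two (closed bounded) intervals. -/
noncomputable def setDist (A B : Set ℝ) : ℝ := max (max (sInf B - sSup A) (sInf A - sSup B)) 0

/-- Cox–de Boor B-splines of order `m` (degree `m-1`) on the knots `τ`. -/
noncomputable def Bspline (τ : ℕ → ℝ) : ℕ → ℕ → ℝ → ℝ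
  | _, 0, _ => 0
  | i, 1, x => if τ i ≤ x ∧ x < τ (i+1) then (1:ℝ) else 0
  | i, (m+2), x =>
      (if τ (i+m+1) = τ i then 0 else (x - τ i) / (τ (i+m+1) - τ i)) * Bspline τ i (m+1) x
    + (if τ (i+m+2) = τ (i+1) then 0 else (τ (i+m+2) - x) / (τ (i+m+2) - τ (i+1))) *
        Bspline τ (i+1) (m+1) x

/-- An `H¹[0,1]`-atom. -/
def IsAtom1 (a : ℝ → ℝ) : Prop :=
  Measurable a ∧
  ((∀ x ∈ Set.Icc (0:ℝ) 1, a x = 1) ∨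
   ∃ α β : ℝ, 0 ≤ α ∧ α < β ∧ β ≤ 1 ∧
     (∀ x, x ∉ Set.Icc α β → a x = 0) ∧
     (∀ x, |a x| ≤ (β - α)⁻¹) ∧
     (∫ x in α..β, a x) = 0)

/-- `c, a` is an atomic representation of `f` in `H¹[0,1]` (convergence in `L¹`). -/
def H1Rep (f : ℝ → ℝ) (c : ℕ → ℝ) (a : ℕ → ℝ → ℝ) : Prop :=
  (∀ n, IsAtom1 (a n)) ∧ Summable (fun n => |c n|) ∧
  Filter.Tendsto
    (fun N => ∫ x in Set.Icc (0:ℝ) 1, |f x - ∑ n ∈ Finset.range N, c n * a n x|)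
    Filter.atTop (nhds 0)

/-- Membership in the atomic Hardy space `H¹[0,1]`. -/
def MemH1 (f : ℝ → ℝ) : Prop := ∃ c a, H1Rep f c a

/-- The atomic `H¹[0,1]` norm. -/
noncomputable def H1norm (f : ℝ → ℝ) : ℝ :=
  sInf {s | ∃ c a, H1Rep f c a ∧ s = ∑' n, |c n|}

/-- The square function of the series `∑ aₙ fₙ`. -/
noncomputable def Pfun (a : ℕ → ℝ) (f : ℕ → ℝ → ℝ) (x : ℝ) : ℝ :=
  Real.sqrt (∑' m, (a m * f m x)^2)

/-- The maximal function of the partial sums of the series `∑ aₙ fₙ`. -/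
noncomputable def Sfun (a : ℕ → ℝ) (f : ℕ → ℝ → ℝ) (x : ℝ) : ℝ :=
  ⨆ N : ℕ, |∑ m ∈ Finset.range N, a m * f m x|

end

/-!
Write `Δ = [L, R]`. Every `𝒯_n` in the sum has exactly `k` knots in `Δ`, so the knots `t_j`
inserted between two such levels avoid `Δ`: the knots in `Δ` are the same for all these levels,
only their indices shift. As each `J_n ⊆ Δ` is a knot interval, two of them either coincide or
meet in at most one point, so the distinct `J_n` have total length at most `|Δ|`.

It remains to see that a fixed `[u, v]` is `J_n` for at most
`F_k = 2 (2k - 1) (2k - 2) + 2k` indices `n`. Being a knot of `𝒯_n`, `t_n` is not inside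
`(u, v)`, and at most `2k` of the `t_n` equal `u` or `v`. The others lie beside `[u, v]`, within
`(k - 1)(v - u)` of it, since `J_n` is the longest knot interval of a B-spline support containing
`t_n`; and by the `Λ⁰` minimality of that support at most `2k - 2` knots of `𝒯_n` lie between
`[u, v]` and `t_n ± (v - u) / 2`. Cut each side into `2k - 2` cells of length `(v - u) / 2`: the
last `n` of a cell sees the `t` of all earlier ones as such knots, so a cell holds at most
`2k - 1` of them.
-/

open scoped Finset

theorem List.Pairwise.getElem_iff_lt_countP {α : Type*} [Preorder α] {l : List α}
    (hl : l.Pairwise (· ≤ ·)) {p : α → Bool} (hp : ∀ a b, a ≤ b → p b → p a) {j : ℕ}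
    (hj : j < l.length) : p l[j] ↔ j < l.countP p := by
  induction l generalizing j with
  | nil => simp at hj
  | cons a l ih =>
    rw [List.pairwise_cons] at hl
    by_cases ha : p a
    · rw [List.countP_cons_of_pos ha]
      cases j with
      | zero => simp [ha]
      | succ j => simpa using ih hl.2 (by simpa using hj)
    · have hle : ∀ b ∈ a :: l, a ≤ b := by simpa using hl.1
      have hnot : ∀ b ∈ a :: l, ¬ p b := fun b hb hpb => ha (hp a b (hle b hb) hpb)
      rw [List.countP_eq_zero.mpr hnot]
      simpa using hnot _ (List.getElem_mem hj)

theorem Finset.card_le_succ_of_forall_card_filter_lt_le {α : Type*} [LinearOrder α]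
    {B : Finset α} {r : ℕ} (h : ∀ q ∈ B, #{q' ∈ B | q' < q} ≤ r) : #B ≤ r + 1 := by
  rcases B.eq_empty_or_nonempty with rfl | hne
  · simp
  have hmax := h _ (B.max'_mem hne)
  have herase : {q' ∈ B | q' < B.max' hne} = B.erase (B.max' hne) := by
    ext q
    simp only [Finset.mem_filter, Finset.mem_erase]
    exact ⟨fun hq => ⟨hq.2.ne, hq.1⟩, fun hq => ⟨hq.2, (B.le_max' q hq.2).lt_of_ne hq.1⟩⟩
  rw [herase, Finset.card_erase_of_mem (B.max'_mem hne)] at hmax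
  omega

theorem Finset.card_le_mul_of_forall_card_filter_near_le {T : Finset ℕ} {x : ℕ → ℝ}
    {w h : ℝ} (hh : 0 < h) {m r : ℕ} (hx : ∀ q ∈ T, w < x q ∧ x q ≤ w + m * h)
    (hnear : ∀ q ∈ T, #{q' ∈ T | q' < q ∧ w < x q' ∧ x q' < x q + h} ≤ r) :
    #T ≤ (r + 1) * m := by
  -- sort the points into the `m` cells `(w + (c - 1) h, w + c h]`, `1 ≤ c ≤ m`
  set cell : ℕ → ℕ := fun q => ⌈(x q - w) / h⌉₊
  have hmaps : ∀ q ∈ T, cell q ∈ Finset.Icc 1 m := by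
    intro q hq
    rw [Finset.mem_Icc, Nat.one_le_ceil_iff, Nat.ceil_le, div_le_iff₀ hh]
    exact ⟨div_pos (by linarith [hx q hq]) hh, by linarith [hx q hq]⟩
  have hcell : ∀ q ∈ T, ∀ q', cell q' = cell q → x q' < x q + h := by
    intro q hq q' heq
    have h1 : x q' - w ≤ cell q * h := by
      rw [← heq, ← div_le_iff₀ hh]
      exact Nat.le_ceil _
    have h2 : (cell q : ℝ) * h < x q - w + h := by
      have := Nat.ceil_lt_add_one (div_pos (sub_pos.mpr (hx q hq).1) hh).le
      calc (cell q : ℝ) * h < ((x q - w) / h + 1) * h := by gcongr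
        _ = x q - w + h := by field_simp
    linarith
  calc #T ≤ (r + 1) * #(Finset.Icc 1 m) := by
        refine Finset.card_le_mul_card_image_of_maps_to hmaps _ fun c _ => ?_
        refine Finset.card_le_succ_of_forall_card_filter_lt_le fun q hq =>
          (hnear q (Finset.mem_filter.mp hq).1).trans' (Finset.card_le_card fun q' hq' => ?_)
        simp only [Finset.mem_filter] at hq hq' ⊢
        exact ⟨hq'.1.1, hq'.2, (hx q' hq'.1.1).1, hcell q hq.1 q' (hq'.1.2.trans hq.2.symm)⟩
    _ = (r + 1) * m := by simp

theorem sub_le_mul_of_forall_add_one_sub_le {f : ℕ → ℝ} {δ : ℝ} {j m : ℕ}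
    (h : ∀ l < m, f (j + l + 1) - f (j + l) ≤ δ) : f (j + m) - f j ≤ m * δ := by
  induction m with
  | zero => simp
  | succ m ih =>
    have := ih fun l hl => h l (by omega)
    have := h m (by omega)
    push_cast
    rw [← add_assoc]
    linarith

theorem Real.aedisjoint_Icc_of_le {a b c d : ℝ} (h : b ≤ c) :
    AEDisjoint volume (Icc a b) (Icc c d) :=
  measure_mono_null (fun _ hx => le_antisymm (hx.1.2.trans h) hx.2.1)
    (Real.volume_singleton (a := c))

theorem MeasureTheory.sum_measure_le_mul_of_eq_or_aedisjoint {α ι : Type*} [MeasurableSpace α]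
    {μ : Measure α} {s : Finset ι} {J : ι → Set α} {A : Set α} {F : ℕ}
    (hmeas : ∀ n ∈ s, NullMeasurableSet (J n) μ) (hsub : ∀ n ∈ s, J n ⊆ A)
    (hdisj : ∀ n ∈ s, ∀ n' ∈ s, J n = J n' ∨ AEDisjoint μ (J n) (J n'))
    (hfib : ∀ n ∈ s, μ (J n) ≠ 0 → #{n' ∈ s | J n' = J n} ≤ F) :
    ∑ n ∈ s, μ (J n) ≤ F * μ A := by
  rw [Finset.sum_comp μ J]
  calc ∑ I ∈ s.image J, #{n ∈ s | J n = I} • μ I ≤ ∑ I ∈ s.image J, F • μ I := by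
        refine Finset.sum_le_sum fun I hI => ?_
        obtain ⟨n, hn, rfl⟩ := Finset.mem_image.mp hI
        by_cases h0 : μ (J n) = 0
        · simp [h0]
        · exact nsmul_le_nsmul_left zero_le (hfib n hn h0)
    _ = F * μ (⋃ I ∈ s.image J, I) := by
        rw [measure_biUnion_finset₀ _ _, Finset.mul_sum]
        · simp only [nsmul_eq_mul]
        · intro I hI I' hI' hne
          obtain ⟨n, hn, rfl⟩ := Finset.mem_image.mp hI
          obtain ⟨n', hn', rfl⟩ := Finset.mem_image.mp hI'
          exact (hdisj n hn n' hn').resolve_left hne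
        · intro I hI
          obtain ⟨n, hn, rfl⟩ := Finset.mem_image.mp hI
          exact hmeas n hn
    _ ≤ F * μ A := by
        gcongr
        exact iUnion₂_subset fun I hI => by
          obtain ⟨n, hn, rfl⟩ := Finset.mem_image.mp hI
          exact hsub n hn

namespace KnotSeq

variable {k : ℕ} (K : KnotSeq k)

noncomputable def countLE (n : ℕ) (x : ℝ) : ℕ := (K.plist n).countP (fun y => decide (y ≤ x))

noncomputable def countLT (n : ℕ) (x : ℝ) : ℕ := (K.plist n).countP (fun y => decide (y < x))

theorem length_plist {n : ℕ} (hn : 1 ≤ n) : (K.plist n).length = n + 2 * k - 1 := by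
  simp only [plist, List.length_mergeSort, List.length_append, List.length_replicate,
    List.length_map, List.length_range]
  omega

theorem pairwise_plist (n : ℕ) : (K.plist n).Pairwise (· ≤ ·) := by
  have h := List.pairwise_mergeSort (le := fun a b : ℝ => decide (a ≤ b))
    (fun a b c hab hbc => by simp only [decide_eq_true_eq] at *; exact hab.trans hbc)
    (fun a b => by simpa using le_total a b) (List.replicate k (0 : ℝ) ++
      List.replicate k 1 ++ (List.range (n - 1)).map fun j => K.t (j + 2))
  exact h.imp (by simp)

theorem countP_plist (n : ℕ) (p : ℝ → Bool) :
    (K.plist n).countP p = (if p 0 then k else 0) + (if p 1 then k else 0) +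
      #{j ∈ Finset.Icc 2 n | p (K.t j)} := by
  have hIcc : Finset.Icc 2 n = (Finset.range (n - 1)).map (addRightEmbedding 2) := by
    rw [Finset.range_eq_Ico, Finset.map_add_right_Ico]
    ext
    simp
    omega
  rw [plist, (List.mergeSort_perm _ _).countP_eq, List.countP_append, List.countP_append,
    List.countP_map, List.countP_replicate, List.countP_replicate, hIcc, Finset.filter_map,
    Finset.card_map, Finset.card_def, Finset.filter_val, Finset.range_val, Multiset.range,
    Multiset.filter_coe, Multiset.coe_card, List.countP_eq_length_filter]
  simp [Function.comp_def]

theorem countP_plist_add {n n' : ℕ} (hn : 2 ≤ n) (hle : n ≤ n') (p : ℝ → Bool) :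
    (K.plist n').countP p = (K.plist n).countP p + #{j ∈ Finset.Ioc n n' | p (K.t j)} := by
  have hunion : Finset.Icc 2 n' = Finset.Icc 2 n ∪ Finset.Ioc n n' := by
    ext
    simp
    omega
  have hdisj : Disjoint (Finset.Icc 2 n) (Finset.Ioc n n') :=
    Finset.disjoint_left.mpr fun j => by simp; omega
  rw [countP_plist, countP_plist, hunion, Finset.filter_union,
    Finset.card_union_of_disjoint (Finset.disjoint_filter_filter hdisj)]
  ring

theorem countLE_le {n : ℕ} (hn : 1 ≤ n) (x : ℝ) : K.countLE n x ≤ n + 2 * k - 1 :=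
  K.length_plist hn ▸ List.countP_le_length

theorem τ_le_iff {n i : ℕ} (hn : 1 ≤ n) (hi : 1 ≤ i) (hi' : i ≤ n + 2 * k - 1) (x : ℝ) :
    K.τ n i ≤ x ↔ i ≤ K.countLE n x := by
  have hlen : i - 1 < (K.plist n).length := by rw [K.length_plist hn]; omega
  have := (K.pairwise_plist n).getElem_iff_lt_countP (p := fun y => decide (y ≤ x))
    (fun a b hab hb => by simpa using (hab.trans (by simpa using hb))) hlen
  simp only [decide_eq_true_eq] at this
  rw [τ, List.getD_eq_getElem _ _ hlen, countLE, this]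
  omega

theorem τ_lt_iff {n i : ℕ} (hn : 1 ≤ n) (hi : 1 ≤ i) (hi' : i ≤ n + 2 * k - 1) (x : ℝ) :
    K.τ n i < x ↔ i ≤ K.countLT n x := by
  have hlen : i - 1 < (K.plist n).length := by rw [K.length_plist hn]; omega
  have := (K.pairwise_plist n).getElem_iff_lt_countP (p := fun y => decide (y < x))
    (fun a b hab hb => by simpa using (hab.trans_lt (by simpa using hb))) hlen
  simp only [decide_eq_true_eq] at this
  rw [τ, List.getD_eq_getElem _ _ hlen, countLT, this]
  omega

theorem τ_mono {n i i' : ℕ} (hn : 1 ≤ n) (hi : 1 ≤ i) (hii' : i ≤ i')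
    (hi' : i' ≤ n + 2 * k - 1) : K.τ n i ≤ K.τ n i' :=
  (K.τ_le_iff hn hi (by omega) _).mpr <|
    hii'.trans ((K.τ_le_iff hn (by omega) hi' _).mp le_rfl)

theorem filter_τ_mem_Icc {n : ℕ} (hn : 1 ≤ n) (L R : ℝ) :
    {i ∈ Finset.Icc 1 (n + 2 * k - 1) | K.τ n i ∈ Icc L R} =
      Finset.Ioc (K.countLT n L) (K.countLE n R) := by
  ext i
  simp only [Finset.mem_filter, Finset.mem_Icc, Finset.mem_Ioc, Set.mem_Icc]
  constructor
  · rintro ⟨⟨hi, hi'⟩, hL, hR⟩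
    exact ⟨not_le.mp fun h => ((K.τ_lt_iff hn hi hi' L).mpr h).not_ge hL,
      (K.τ_le_iff hn hi hi' R).mp hR⟩
  · rintro ⟨hL, hR⟩
    have hi' := hR.trans (K.countLE_le hn R)
    exact ⟨⟨by omega, hi'⟩, not_lt.mp fun h => (K.τ_lt_iff hn (by omega) hi' L).mp h |>.not_gt hL,
      (K.τ_le_iff hn (by omega) hi' R).mpr hR⟩

theorem countLE_eq_countLT_add {n : ℕ} (hn : 1 ≤ n) {L R : ℝ} {d : ℕ} (hd : d ≠ 0)
    (h : #{i ∈ Finset.Icc 1 (n + 2 * k - 1) | K.τ n i ∈ Icc L R} = d) :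
    K.countLE n R = K.countLT n L + d := by
  rw [K.filter_τ_mem_Icc hn, Nat.card_Ioc] at h
  omega

theorem ncard_setOf_eq_card_filter (n : ℕ) (P : ℝ → Prop) :
    ({j | 2 ≤ j ∧ j ≤ n ∧ P (K.t j)} : Set ℕ).ncard = #{j ∈ Finset.Icc 2 n | P (K.t j)} := by
  rw [← Set.ncard_coe_finset]
  congr
  ext
  simp [and_assoc]

theorem countLE_t {n : ℕ} (hn : 2 ≤ n) : K.countLE n (K.t n) = K.i0 n := by
  have ht := K.mem_Ioo n hn
  have hsplit : #{j ∈ Finset.Icc 2 n | K.t j ≤ K.t n} =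
      #{j ∈ Finset.Icc 2 n | K.t j < K.t n} + #{j ∈ Finset.Icc 2 n | K.t j = K.t n} := by
    rw [← Finset.card_union_of_disjoint (Finset.disjoint_filter_filter' _ _ fun _ h h' x hx =>
      (h x hx).ne (h' x hx)), ← Finset.filter_or]
    simp_rw [le_iff_lt_or_eq]
  rw [countLE, countP_plist, i0, K.ncard_setOf_eq_card_filter n (· < K.t n),
    K.ncard_setOf_eq_card_filter n (· = K.t n)]
  simp [ht.1.le, ht.2.not_ge, hsplit, add_assoc]

theorem countLT_t {n : ℕ} (hn : 2 ≤ n) :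
    K.countLT n (K.t n) = k + #{j ∈ Finset.Icc 2 n | K.t j < K.t n} := by
  have ht := K.mem_Ioo n hn
  simp [countLT, countP_plist, ht.1, ht.2.le]

theorem countLT_t_lt_i0 {n : ℕ} (hn : 2 ≤ n) : K.countLT n (K.t n) < K.i0 n := by
  have hself : 0 < #{j ∈ Finset.Icc 2 n | K.t j = K.t n} :=
    Finset.card_pos.mpr ⟨n, by simp [hn]⟩
  rw [K.countLT_t hn, i0, K.ncard_setOf_eq_card_filter n (· < K.t n),
    K.ncard_setOf_eq_card_filter n (· = K.t n)]
  omega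

theorem lt_i0 {n : ℕ} (hn : 2 ≤ n) : k < K.i0 n := by
  have := K.countLT_t_lt_i0 hn
  rw [K.countLT_t hn] at this
  omega

theorem i0_le {n : ℕ} (hn : 2 ≤ n) : K.i0 n ≤ n + k - 1 := by
  have := K.countLE_t hn
  have hcard := Finset.card_filter_le (Finset.Icc 2 n) (fun j => K.t j ≤ K.t n)
  have ht := K.mem_Ioo n hn
  simp only [countLE, countP_plist, decide_eq_true_eq, ht.1.le, ht.2.not_ge, if_true, if_false,
    Nat.card_Icc] at this hcard
  omega

theorem τ_i0 {n : ℕ} (hn : 2 ≤ n) : K.τ n (K.i0 n) = K.t n := by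
  have h1 := K.lt_i0 hn
  have h2 := K.i0_le hn
  refine le_antisymm ((K.τ_le_iff (by omega) (by omega) (by omega) _).mpr (K.countLE_t hn).ge)
    (not_lt.mp fun h => ?_)
  have := (K.τ_lt_iff (by omega) (by omega) (by omega) _).mp h
  have := K.countLT_t_lt_i0 hn
  omega

theorem countLE_add {n n' : ℕ} (hn : 2 ≤ n) (hle : n ≤ n') (x : ℝ) :
    K.countLE n' x = K.countLE n x + #{j ∈ Finset.Ioc n n' | K.t j ≤ x} := by
  simpa [countLE] using K.countP_plist_add hn hle (fun y => decide (y ≤ x))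

theorem countLT_add {n n' : ℕ} (hn : 2 ≤ n) (hle : n ≤ n') (x : ℝ) :
    K.countLT n' x = K.countLT n x + #{j ∈ Finset.Ioc n n' | K.t j < x} := by
  simpa [countLT] using K.countP_plist_add hn hle (fun y => decide (y < x))

theorem t_notMem_Icc_of_countLE_eq {n n' : ℕ} (hn : 2 ≤ n) (hle : n ≤ n') {L R : ℝ} {d : ℕ}
    (h : K.countLE n R = K.countLT n L + d) (h' : K.countLE n' R = K.countLT n' L + d) :
    ∀ j ∈ Finset.Ioc n n', K.t j ∉ Icc L R := by
  intro j hj hmem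
  have hsub : {j ∈ Finset.Ioc n n' | K.t j < L} ⊆ {j ∈ Finset.Ioc n n' | K.t j ≤ R} :=
    fun i hi => by
      simp only [Finset.mem_filter] at hi ⊢
      exact ⟨hi.1, hi.2.le.trans (hmem.1.trans hmem.2)⟩
  have heq := Finset.eq_of_subset_of_card_le hsub <| by
    have := K.countLE_add hn hle R
    have := K.countLT_add hn hle L
    omega
  have : j ∈ {j ∈ Finset.Ioc n n' | K.t j < L} := heq ▸ Finset.mem_filter.mpr ⟨hj, hmem.2⟩
  exact (Finset.mem_filter.mp this).2.not_ge hmem.1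

theorem τ_add_card_filter_lt {n n' i : ℕ} (hn : 2 ≤ n) (hle : n ≤ n') (hi : 1 ≤ i)
    (hi' : i ≤ n + 2 * k - 1) (hnew : ∀ j ∈ Finset.Ioc n n', K.t j ≠ K.τ n i) :
    i + #{j ∈ Finset.Ioc n n' | K.t j < K.τ n i} ≤ n' + 2 * k - 1 ∧
      K.τ n' (i + #{j ∈ Finset.Ioc n n' | K.t j < K.τ n i}) = K.τ n i := by
  set x := K.τ n i
  have hLE : K.countLE n' x = K.countLE n x + #{j ∈ Finset.Ioc n n' | K.t j < x} := by
    rw [K.countLE_add hn hle, Finset.filter_congr fun j hj => (hnew j hj).le_iff_lt]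
  have hLT := K.countLT_add hn hle x
  have hle_x : i ≤ K.countLE n x := (K.τ_le_iff (by omega) hi hi' x).mp le_rfl
  have hlt_x : ¬ i ≤ K.countLT n x := fun h => ((K.τ_lt_iff (by omega) hi hi' x).mpr h).false
  have hbound := K.countLE_le (n := n') (by omega) x
  refine ⟨by omega, le_antisymm ((K.τ_le_iff (by omega) (by omega) (by omega) x).mpr (by omega))
    (not_lt.mp fun h => ?_)⟩
  have := (K.τ_lt_iff (by omega) (by omega) (by omega) x).mp h
  omega

theorem card_filter_mem_Ioo_add_countLE_le (q : ℕ) {a b : ℝ} (hab : a < b) :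
    #{j ∈ Finset.Icc 2 q | K.t j ∈ Ioo a b} + K.countLE q a ≤ K.countLT q b := by
  have hnew : #{j ∈ Finset.Icc 2 q | K.t j ∈ Ioo a b} + #{j ∈ Finset.Icc 2 q | K.t j ≤ a} ≤
      #{j ∈ Finset.Icc 2 q | K.t j < b} := by
    rw [← Finset.card_union_of_disjoint (Finset.disjoint_filter_filter' _ _ fun _ h h' x hx =>
      (h x hx).1.not_ge (h' x hx))]
    refine Finset.card_le_card fun j hj => ?_
    simp only [Finset.mem_union, Finset.mem_filter, Set.mem_Ioo] at hj ⊢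
    rcases hj with ⟨hj, -, hb⟩ | ⟨hj, ha⟩
    exacts [⟨hj, hb⟩, ⟨hj, ha.trans_lt hab⟩]
  have h0 : 0 ≤ a → 0 < b := fun h => h.trans_lt hab
  have h1 : 1 ≤ a → 1 < b := fun h => h.trans_lt hab
  simp only [countLE, countLT, countP_plist, decide_eq_true_eq]
  split_ifs <;> simp_all <;> omega

theorem card_filter_t_eq_le (T : Finset ℕ) (x : ℝ) : #{q ∈ T | 2 ≤ q ∧ K.t q = x} ≤ k := by
  rw [← Set.ncard_coe_finset]
  refine (Set.ncard_le_ncard (fun q hq => ?_) (K.mult_finite x)).trans (K.mult_le x)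
  exact (Finset.mem_filter.mp (Finset.mem_coe.mp hq)).2

theorem eq_or_aedisjoint_Icc_τ {n a b : ℕ} (hn : 1 ≤ n) (ha : 1 ≤ a)
    (ha' : a + 1 ≤ n + 2 * k - 1) (hb : 1 ≤ b) (hb' : b + 1 ≤ n + 2 * k - 1) :
    Icc (K.τ n a) (K.τ n (a + 1)) = Icc (K.τ n b) (K.τ n (b + 1)) ∨
      AEDisjoint volume (Icc (K.τ n a) (K.τ n (a + 1))) (Icc (K.τ n b) (K.τ n (b + 1))) := by
  rcases lt_trichotomy a b with h | rfl | h
  · exact .inr (Real.aedisjoint_Icc_of_le (K.τ_mono hn (by omega) h (by omega)))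
  · exact .inl rfl
  · exact .inr (Real.aedisjoint_Icc_of_le (K.τ_mono hn (by omega) h (by omega))).symm

variable {K}

theorem IsCharInterval.exists_eq_Icc {n : ℕ} {J : Set ℝ} (hn : 2 ≤ n)
    (hJ : K.IsCharInterval n J) :
    ∃ a, 1 ≤ a ∧ a + 1 ≤ n + 2 * k - 1 ∧ J = Icc (K.τ n a) (K.τ n (a + 1)) := by
  obtain ⟨j, hjΛ1, l, hl, hJ, -⟩ := hJ
  have hj := Finset.mem_Icc.mp (Finset.mem_filter.mp (Finset.mem_filter.mp hjΛ1).1).1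
  have := K.lt_i0 hn
  have := K.i0_le hn
  exact ⟨j + l, by omega, by omega, hJ⟩

theorem IsCharInterval.exists_support {n : ℕ} {u v : ℝ} (hn : 2 ≤ n)
    (hJ : K.IsCharInterval n (Icc u v)) :
    ∃ j l, K.i0 n - k ≤ j ∧ j ≤ K.i0 n ∧ l < k ∧ K.τ n (j + l) = u ∧ K.τ n (j + l + 1) = v ∧
      K.τ n (j + k) - K.τ n j ≤ k * (v - u) ∧ v - u ≤ 2 * K.len n (K.i0 n) k ∧
      v - u ≤ 2 * K.len n (K.i0 n - k) k := by
  obtain ⟨j, hjΛ1, l, hl, hJ, hmax⟩ := hJ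
  obtain ⟨hj, hΛ0⟩ := Finset.mem_filter.mp (Finset.mem_filter.mp hjΛ1).1
  rw [Finset.mem_Icc] at hj
  have := K.lt_i0 hn
  have := K.i0_le hn
  obtain ⟨hu, hv⟩ := (Icc_eq_Icc_iff (K.τ_mono (by omega) (by omega) (Nat.le_succ _)
    (by omega))).mp hJ.symm
  have hspan : v - u ≤ K.len n j k := by
    have := K.τ_mono (n := n) (i := j) (i' := j + l) (by omega) (by omega) (by omega) (by omega)
    have := K.τ_mono (n := n) (i := j + l + 1) (i' := j + k) (by omega) (by omega) (by omega)
      (by omega)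
    rw [len]
    linarith
  refine ⟨j, l, hj.1, hj.2, hl, hu, hv, sub_le_mul_of_forall_add_one_sub_le fun l' hl' => ?_,
    hspan.trans (hΛ0 _ (by simp)), hspan.trans (hΛ0 _ (by simp))⟩
  simpa [len, ← hu, ← hv, add_assoc] using hmax l' hl'

theorem IsCharInterval.t_le {n : ℕ} {u v : ℝ} (hn : 2 ≤ n)
    (hJ : K.IsCharInterval n (Icc u v)) : K.t n ≤ u + k * (v - u) := by
  obtain ⟨j, l, hj, hj', hl, hu, -, hlen, -⟩ := hJ.exists_support hn
  have := K.lt_i0 hn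
  have := K.i0_le hn
  have := K.τ_mono (n := n) (i := j) (i' := j + l) (by omega) (by omega) (by omega) (by omega)
  have := K.τ_mono (n := n) (i := K.i0 n) (i' := j + k) (by omega) (by omega) (by omega)
    (by omega)
  rw [K.τ_i0 hn] at this
  linarith

theorem IsCharInterval.le_t {n : ℕ} {u v : ℝ} (hn : 2 ≤ n)
    (hJ : K.IsCharInterval n (Icc u v)) : v - k * (v - u) ≤ K.t n := by
  obtain ⟨j, l, hj, hj', hl, -, hv, hlen, -⟩ := hJ.exists_support hn
  have := K.lt_i0 hn
  have := K.i0_le hn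
  have := K.τ_mono (n := n) (i := j + l + 1) (i' := j + k) (by omega) (by omega) (by omega)
    (by omega)
  have := K.τ_mono (n := n) (i := j) (i' := K.i0 n) (by omega) (by omega) (by omega) (by omega)
  rw [K.τ_i0 hn] at this
  linarith

/-- At most `2k - 2` knots of `𝒯_n` lie strictly between `v` and `t_n + (v - u) / 2`: those
have indices between `j⁰ + 1 ≥ i₀ - k + 1` and `i₀ + k - 1`, as `τ_{i₀+k} - τ_{i₀} ≥ (v - u) / 2`
by the `Λ⁰` condition. -/
theorem IsCharInterval.countLT_t_add_half_le {n : ℕ} {u v : ℝ} (hn : 2 ≤ n)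
    (hJ : K.IsCharInterval n (Icc u v)) :
    K.countLT n (K.t n + (v - u) / 2) + 2 ≤ K.countLE n v + 2 * k := by
  obtain ⟨j, l, hj, hj', hl, -, hv, -, hi0, -⟩ := hJ.exists_support hn
  have := K.lt_i0 hn
  have := K.i0_le hn
  have hle : j + l + 1 ≤ K.countLE n v :=
    (K.τ_le_iff (by omega) (by omega) (by omega) _).mp hv.le
  have hlt : ¬ K.i0 n + k ≤ K.countLT n (K.t n + (v - u) / 2) := fun h => by
    have := (K.τ_lt_iff (by omega) (by omega) (by omega) _).mpr h
    rw [len, K.τ_i0 hn] at hi0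
    linarith
  omega

theorem IsCharInterval.countLT_le_countLE_t_sub_half {n : ℕ} {u v : ℝ} (hn : 2 ≤ n)
    (hJ : K.IsCharInterval n (Icc u v)) :
    K.countLT n u + 2 ≤ K.countLE n (K.t n - (v - u) / 2) + 2 * k := by
  obtain ⟨j, l, hj, hj', hl, hu, -, -, -, hi0⟩ := hJ.exists_support hn
  have := K.lt_i0 hn
  have := K.i0_le hn
  have hlt : ¬ j + l ≤ K.countLT n u :=
    fun h => ((K.τ_lt_iff (by omega) (by omega) (by omega) _).mpr h).ne hu
  have hle : K.i0 n - k ≤ K.countLE n (K.t n - (v - u) / 2) := by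
    refine (K.τ_le_iff (by omega) (by omega) (by omega) _).mp ?_
    rw [len, Nat.sub_add_cancel (by omega), K.τ_i0 hn] at hi0
    linarith
  omega

theorem IsCharInterval.t_notMem_Ioo {n : ℕ} {u v : ℝ} (hn : 2 ≤ n)
    (hJ : K.IsCharInterval n (Icc u v)) : K.t n ∉ Ioo u v := by
  obtain ⟨j, l, hj, hj', hl, hu, hv, -⟩ := hJ.exists_support hn
  have := K.lt_i0 hn
  have := K.i0_le hn
  rw [← K.τ_i0 hn, ← hu, ← hv]
  rintro ⟨h1, h2⟩
  rcases le_or_gt (K.i0 n) (j + l) with h | h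
  · exact (K.τ_mono (by omega) (by omega) h (by omega)).not_gt h1
  · exact (K.τ_mono (by omega) (by omega) h (by omega)).not_gt h2

theorem card_le_of_isCharInterval_of_lt_t {u v : ℝ} (huv : u < v) {T : Finset ℕ}
    (hT : ∀ q ∈ T, 2 ≤ q ∧ K.IsCharInterval q (Icc u v) ∧ v < K.t q) :
    #T ≤ (2 * k - 1) * (2 * k - 2) := by
  have hk := K.two_le
  have hcast : ((2 * k - 2 : ℕ) : ℝ) * ((v - u) / 2) = (k - 1) * (v - u) := by
    rw [Nat.cast_sub (by omega)]
    push_cast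
    ring
  convert Finset.card_le_mul_of_forall_card_filter_near_le (x := K.t) (w := v)
    (h := (v - u) / 2) (m := 2 * k - 2) (r := 2 * k - 2) (by linarith) (fun q hq => ?_)
    (fun q hq => ?_) using 2
  · omega
  · obtain ⟨hq2, hJ, hvq⟩ := hT q hq
    have := hJ.t_le hq2
    exact ⟨hvq, by rw [hcast]; linarith⟩
  · obtain ⟨hq2, hJ, hvq⟩ := hT q hq
    have := K.card_filter_mem_Ioo_add_countLE_le q (show v < K.t q + (v - u) / 2 by linarith)
    have := hJ.countLT_t_add_half_le hq2
    refine (Finset.card_le_card (t := {j ∈ Finset.Icc 2 q | K.t j ∈ Ioo v (K.t q + (v - u) / 2)})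
      fun q' hq' => ?_).trans (by omega)
    simp only [Finset.mem_filter, Finset.mem_Icc, Set.mem_Ioo] at hq' ⊢
    exact ⟨⟨(hT q' hq'.1).1, hq'.2.1.le⟩, hq'.2.2⟩

theorem card_le_of_isCharInterval_of_t_lt {u v : ℝ} (huv : u < v) {T : Finset ℕ}
    (hT : ∀ q ∈ T, 2 ≤ q ∧ K.IsCharInterval q (Icc u v) ∧ K.t q < u) :
    #T ≤ (2 * k - 1) * (2 * k - 2) := by
  have hk := K.two_le
  have hcast : ((2 * k - 2 : ℕ) : ℝ) * ((v - u) / 2) = (k - 1) * (v - u) := by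
    rw [Nat.cast_sub (by omega)]
    push_cast
    ring
  convert Finset.card_le_mul_of_forall_card_filter_near_le (x := fun q => -K.t q) (w := -u)
    (h := (v - u) / 2) (m := 2 * k - 2) (r := 2 * k - 2) (by linarith) (fun q hq => ?_)
    (fun q hq => ?_) using 2
  · omega
  · obtain ⟨hq2, hJ, hqu⟩ := hT q hq
    have := hJ.le_t hq2
    exact ⟨by linarith, by rw [hcast]; linarith⟩
  · obtain ⟨hq2, hJ, hqu⟩ := hT q hq
    have := K.card_filter_mem_Ioo_add_countLE_le q (show K.t q - (v - u) / 2 < u by linarith)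
    have := hJ.countLT_le_countLE_t_sub_half hq2
    refine (Finset.card_le_card (t := {j ∈ Finset.Icc 2 q | K.t j ∈ Ioo (K.t q - (v - u) / 2) u})
      fun q' hq' => ?_).trans (by omega)
    simp only [Finset.mem_filter, Finset.mem_Icc, Set.mem_Ioo] at hq' ⊢
    exact ⟨⟨(hT q' hq'.1).1, hq'.2.1.le⟩, by linarith, by linarith⟩

theorem card_le_of_isCharInterval {u v : ℝ} (huv : u < v) {T : Finset ℕ}
    (hT : ∀ q ∈ T, 2 ≤ q ∧ K.IsCharInterval q (Icc u v)) :
    #T ≤ 2 * ((2 * k - 1) * (2 * k - 2)) + 2 * k := by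
  set A := {q ∈ T | 2 ≤ q ∧ K.IsCharInterval q (Icc u v) ∧ v < K.t q}
  set B := {q ∈ T | 2 ≤ q ∧ K.IsCharInterval q (Icc u v) ∧ K.t q < u}
  set C := {q ∈ T | 2 ≤ q ∧ K.t q = u}
  set D := {q ∈ T | 2 ≤ q ∧ K.t q = v}
  have hsub : T ⊆ A ∪ B ∪ C ∪ D := by
    intro q hq
    obtain ⟨hq2, hJ⟩ := hT q hq
    have := hJ.t_notMem_Ioo hq2
    simp only [A, B, C, D, Finset.mem_union, Finset.mem_filter, Set.mem_Ioo, not_and_or,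
      not_lt] at this ⊢
    rcases this with h | h <;> rcases h.lt_or_eq with h | h <;> simp_all
  have hA := card_le_of_isCharInterval_of_lt_t huv (T := A) fun q hq => (Finset.mem_filter.mp hq).2
  have hB := card_le_of_isCharInterval_of_t_lt huv (T := B) fun q hq => (Finset.mem_filter.mp hq).2
  have hC : #C ≤ k := K.card_filter_t_eq_le T u
  have hD : #D ≤ k := K.card_filter_t_eq_le T v
  have := Finset.card_le_card hsub
  have := Finset.card_union_le (A ∪ B ∪ C) D
  have := Finset.card_union_le (A ∪ B) C
  have := Finset.card_union_le A B
  omega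

theorem IsCharInterval.eq_or_aedisjoint {n n' : ℕ} {J J' : Set ℝ} {L R : ℝ} (hn : 2 ≤ n)
    (hle : n ≤ n') (hnew : ∀ j ∈ Finset.Ioc n n', K.t j ∉ Icc L R)
    (hJ : K.IsCharInterval n J) (hJ' : K.IsCharInterval n' J') (hJLR : J ⊆ Icc L R) :
    J = J' ∨ AEDisjoint volume J J' := by
  obtain ⟨a, ha, ha', rfl⟩ := hJ.exists_eq_Icc hn
  obtain ⟨b, hb, hb', rfl⟩ := hJ'.exists_eq_Icc (hn.trans hle)
  -- both endpoints of `J` move up by the number of inserted knots below `L`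
  have hshift : ∀ i, a ≤ i → i ≤ a + 1 →
      i + #{j ∈ Finset.Ioc n n' | K.t j < L} ≤ n' + 2 * k - 1 ∧
        K.τ n' (i + #{j ∈ Finset.Ioc n n' | K.t j < L}) = K.τ n i := by
    intro i hai hia
    have hiLR : K.τ n i ∈ Icc L R := hJLR
      ⟨K.τ_mono (by omega) ha hai (by omega), K.τ_mono (by omega) (by omega) hia ha'⟩
    have hcongr : #{j ∈ Finset.Ioc n n' | K.t j < K.τ n i} =
        #{j ∈ Finset.Ioc n n' | K.t j < L} := by
      refine congrArg _ (Finset.filter_congr fun j hj => ?_)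
      have := hnew j hj
      simp only [Set.mem_Icc, not_and_or, not_le] at this
      constructor <;> intro h
      · rcases this with h' | h'
        exacts [h', absurd (h.trans_le hiLR.2) h'.not_gt]
      · exact h.trans_le hiLR.1
    rw [← hcongr]
    exact K.τ_add_card_filter_lt hn hle (by omega) (by omega) fun j hj h => hnew j hj (h ▸ hiLR)
  obtain ⟨-, hu⟩ := hshift a le_rfl (by omega)
  obtain ⟨hbound, hv⟩ := hshift (a + 1) (by omega) le_rfl
  rw [← hu, ← hv, add_right_comm]
  exact K.eq_or_aedisjoint_Icc_τ (by omega) (by omega) (by omega) hb hb'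

variable (K) in
theorem sum_volume_le_of_countLE_eq {J : ℕ → Set ℝ} (hJ : ∀ n, 2 ≤ n → K.IsCharInterval n (J n))
    {L R : ℝ} {s : Finset ℕ}
    (hs : ∀ n ∈ s, 2 ≤ n ∧ K.countLE n R = K.countLT n L + k ∧ J n ⊆ Icc L R) :
    ∑ n ∈ s, volume (J n) ≤ (2 * ((2 * k - 1) * (2 * k - 2)) + 2 * k : ℕ) * volume (Icc L R) := by
  refine sum_measure_le_mul_of_eq_or_aedisjoint (fun n hn => ?_) (fun n hn => (hs n hn).2.2)
    (fun n hn n' hn' => ?_) (fun n hn h0 => ?_)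
  · obtain ⟨a, -, -, ha⟩ := (hJ n (hs n hn).1).exists_eq_Icc (hs n hn).1
    exact ha ▸ measurableSet_Icc.nullMeasurableSet
  · wlog hle : n ≤ n' generalizing n n'
    · exact (this n' hn' n hn (by omega)).imp Eq.symm AEDisjoint.symm
    obtain ⟨hn2, hcount, hJLR⟩ := hs n hn
    exact (hJ n hn2).eq_or_aedisjoint hn2 hle
      (K.t_notMem_Icc_of_countLE_eq hn2 hle hcount (hs n' hn').2.1) (hJ n' (hs n' hn').1) hJLR
  · obtain ⟨a, -, -, ha⟩ := (hJ n (hs n hn).1).exists_eq_Icc (hs n hn).1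
    have huv : K.τ n a < K.τ n (a + 1) := by simpa [ha, Real.volume_Icc] using h0
    refine card_le_of_isCharInterval (K := K) huv fun q hq => ?_
    obtain ⟨hqs, hq⟩ := Finset.mem_filter.mp hq
    exact ⟨(hs q hqs).1, ha ▸ hq ▸ hJ q (hs q hqs).1⟩

end KnotSeq

/-- First half of Lemma 4.7: for a `(k-1)`-regular knot sequence and a span
`Δ = D_{m,i}^{(k-1)}` of `k` consecutive knots, the sum of `|J_n|` over those `n` for
which `Δ` contains exactly `k` knots of `𝒯_n` and `J_n ⊆ Δ` is at most `c_k |Δ|`. -/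
theorem sum_charIntervals_inside (k : ℕ) (hk : 2 ≤ k) :
    ∃ c : ℝ, 0 < c ∧
      ∀ (K : KnotSeq k) (γ : ℝ), 1 ≤ γ → K.Regular (k-1) γ →
      ∀ (J : ℕ → Set ℝ), (∀ n, 2 ≤ n → K.IsCharInterval n (J n)) →
      ∀ (m i : ℕ), 2 ≤ m → 2 ≤ i → i ≤ m + k - 1 →
        ∀ s : Finset ℕ,
          (∀ n ∈ s, 2 ≤ n ∧
            ((Finset.Icc 1 (n+2*k-1)).filter (fun idx =>
              K.τ n idx ∈ Set.Icc (K.τ m i) (K.τ m (i+(k-1))))).card = k ∧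
            J n ⊆ Set.Icc (K.τ m i) (K.τ m (i+(k-1)))) →
          ∑ n ∈ s, (MeasureTheory.volume (J n)).toReal ≤ c * K.len m i (k-1) := by
  set F := 2 * ((2 * k - 1) * (2 * k - 2)) + 2 * k
  refine ⟨F, Nat.cast_pos.mpr (Nat.add_pos_right _ (by omega)), ?_⟩
  intro K γ _ _ J hJ m i hm hi hi' s hs
  set L := K.τ m i
  set R := K.τ m (i + (k - 1))
  have hLR : L ≤ R := K.τ_mono (by omega) (by omega) (by omega) (by omega)
  have hvol : ∑ n ∈ s, volume (J n) ≤ F * volume (Icc L R) :=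
    K.sum_volume_le_of_countLE_eq hJ fun n hn => ⟨(hs n hn).1,
      K.countLE_eq_countLT_add (by linarith [(hs n hn).1]) (by omega) (hs n hn).2.1, (hs n hn).2.2⟩
  have hfin : ∀ n ∈ s, volume (J n) ≠ ⊤ := fun n hn =>
    ((measure_mono (hs n hn).2.2).trans_lt measure_Icc_lt_top).ne
  calc ∑ n ∈ s, (volume (J n)).toReal = (∑ n ∈ s, volume (J n)).toReal :=
        (ENNReal.toReal_sum hfin).symm
    _ ≤ (F * volume (Icc L R)).toReal :=
        ENNReal.toReal_mono (ENNReal.mul_ne_top (ENNReal.natCast_ne_top F)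
          measure_Icc_lt_top.ne) hvol
    _ = F * K.len m i (k - 1) := by simp [Real.volume_Icc, hLR, KnotSeq.len, L, R]
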